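/- In the prompt-tuned memory-augmented HMM with prompt π defined by π_{(m_{1:N},j,s)} = 1 if m_{j*} ∈ supp(b) and 0 otherwise, assume the initial hidden-state distribution is stationary (P(H_0) = A P(H_0)). Then for every position i > 1 and every x ∈ X^T with P(X̂_{−i} = x̂_{−i}) > 0: supp(P(H_i | X̂_{−i} = x̂_{−i})) ⊆ supp(P(H_{i−1} | X_{−(i−1)} = x_{−(i−1)})). -/
import Mathlib


open scoped Classical
open Matrix

noncomputable section

/-- Forward pass for a Markov chain with transition matrix `A`. -/
def fwdVec {H : Type*} [Fintype H] (A : Matrix H H ℝ) :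
    (H → ℝ) → List (H → ℝ) → (H → ℝ)
  | μ, [] => μ
  | μ, v :: vs => fwdVec A (A.mulVec fun h => μ h * v h) vs

/-- `mJointAt A μ W m x i g = P(H_i = g, X_{−i} = x_{−i} | M = m)` in a
memory-augmented HMM (hidden chain `H_1, …, H_T`, `P(H_1) = A μ`). -/
def mJointAt {𝕄 S X : Type*} {N T : ℕ} [Fintype S] [DecidableEq S]
    (A : Matrix (Fin N × S) (Fin N × S) ℝ) (μ : Fin N × S → ℝ)
    (W : X → 𝕄 → Fin N × S → ℝ) (m : Fin N → 𝕄)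
    (x : Fin T → X) (i : Fin T) (g : Fin N × S) : ℝ :=
  ∑ h, fwdVec A (A.mulVec μ)
    (List.ofFn fun k : Fin T =>
      if k = i then (fun g' => if g' = g then 1 else 0)
      else fun g' => W (x k) (m g'.1) g') h

/-- `mZ … x i = P(X_{−i} = x_{−i})`. -/
def mZ {𝕄 S X : Type*} {N T : ℕ} [Fintype 𝕄] [Fintype S] [DecidableEq S]
    (pM : (Fin N → 𝕄) → ℝ) (A : Matrix (Fin N × S) (Fin N × S) ℝ)
    (μ : Fin N × S → ℝ) (W : X → 𝕄 → Fin N × S → ℝ)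
    (x : Fin T → X) (i : Fin T) : ℝ :=
  ∑ m, pM m * ∑ g, mJointAt A μ W m x i g

/-- `mSeqPm … m x = P(X_{1:T} = x | M = m)`. -/
def mSeqPm {𝕄 S X : Type*} {N T : ℕ} [Fintype S]
    (A : Matrix (Fin N × S) (Fin N × S) ℝ) (μ : Fin N × S → ℝ)
    (W : X → 𝕄 → Fin N × S → ℝ) (m : Fin N → 𝕄) (x : Fin T → X) : ℝ :=
  ∑ h, fwdVec A (A.mulVec μ)
    (List.ofFn fun k : Fin T => fun g' => W (x k) (m g'.1) g') h

/-- `mSeqP … x = P(X_{1:T} = x)`. -/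
def mSeqP {𝕄 S X : Type*} {N T : ℕ} [Fintype 𝕄] [Fintype S]
    (pM : (Fin N → 𝕄) → ℝ) (A : Matrix (Fin N × S) (Fin N × S) ℝ)
    (μ : Fin N × S → ℝ) (W : X → 𝕄 → Fin N × S → ℝ) (x : Fin T → X) : ℝ :=
  ∑ m, pM m * mSeqPm A μ W m x

/-- `mGtok … x i z = P(X_i = z | X_{−i} = x_{−i})`, the pretrained model
output `G_i(x)` at position `i`. -/
def mGtok {𝕄 S X : Type*} {N T : ℕ} [Fintype 𝕄] [Fintype S] [DecidableEq S]
    (pM : (Fin N → 𝕄) → ℝ) (A : Matrix (Fin N × S) (Fin N × S) ℝ)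
    (μ : Fin N × S → ℝ) (W : X → 𝕄 → Fin N × S → ℝ)
    (x : Fin T → X) (i : Fin T) (z : X) : ℝ :=
  (∑ m, pM m * ∑ g, mJointAt A μ W m x i g * W z (m g.1) g) / mZ pM A μ W x i

/-- `mPostH … x i g = P(H_i = g | X_{−i} = x_{−i})`. -/
def mPostH {𝕄 S X : Type*} {N T : ℕ} [Fintype 𝕄] [Fintype S] [DecidableEq S]
    (pM : (Fin N → 𝕄) → ℝ) (A : Matrix (Fin N × S) (Fin N × S) ℝ)
    (μ : Fin N × S → ℝ) (W : X → 𝕄 → Fin N × S → ℝ)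
    (x : Fin T → X) (i : Fin T) (g : Fin N × S) : ℝ :=
  (∑ m, pM m * mJointAt A μ W m x i g) / mZ pM A μ W x i

/-- The 0/1 prompt of the paper: `π_{(m_{1:N},j,s)} = 1` if `m_{j*} ∈ supp(b)`
and `0` otherwise (it does not depend on `(j,s)`). -/
def promptV {𝕄 : Type*} {N : ℕ} (b : 𝕄 → ℝ) (jstar : Fin N)
    (m : Fin N → 𝕄) : ℝ :=
  if b (m jstar) ≠ 0 then 1 else 0

/-- Conditioned on `M = m`, the emission-likelihood vector at position `k`
(0-indexed) of the modified sequence `x̂ = (z̃, x_1, …, x_T)`: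
at position `0` the fake token `z̃` has likelihood `π_{(m,j,s)}`, and at
position `k ≥ 1` the token `x_k` has likelihood `W (x_k) (m j) (j,s)`. -/
def hatEm {𝕄 S X : Type*} {N T : ℕ} (W : X → 𝕄 → Fin N × S → ℝ)
    (b : 𝕄 → ℝ) (jstar : Fin N) (m : Fin N → 𝕄) (x : Fin T → X)
    (k : Fin (T + 1)) : Fin N × S → ℝ :=
  if hk : (k : ℕ) = 0 then fun _ => promptV b jstar m
  else fun g => W (x ⟨(k : ℕ) - 1, by have := k.isLt; omega⟩) (m g.1) g

/-- `hatJointAt … m x i g = P(H_i = g, X̂_{−i} = x̂_{−i} | M = m)` for the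
modified sequence `X̂` of length `T+1` (hidden chain `H_1, …, H_{T+1}`,
`P(H_1) = A μ`). -/
def hatJointAt {𝕄 S X : Type*} {N T : ℕ} [Fintype S] [DecidableEq S]
    (A : Matrix (Fin N × S) (Fin N × S) ℝ) (μ : Fin N × S → ℝ)
    (W : X → 𝕄 → Fin N × S → ℝ) (b : 𝕄 → ℝ) (jstar : Fin N)
    (m : Fin N → 𝕄) (x : Fin T → X) (i : Fin (T + 1)) (g : Fin N × S) : ℝ :=
  ∑ h, fwdVec A (A.mulVec μ)
    (List.ofFn fun k : Fin (T + 1) =>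
      if k = i then (fun g' => if g' = g then 1 else 0)
      else hatEm W b jstar m x k) h

/-- `hatZ … x i = P(X̂_{−i} = x̂_{−i})`. -/
def hatZ {𝕄 S X : Type*} {N T : ℕ} [Fintype 𝕄] [Fintype S] [DecidableEq S]
    (pM : (Fin N → 𝕄) → ℝ) (A : Matrix (Fin N × S) (Fin N × S) ℝ)
    (μ : Fin N × S → ℝ) (W : X → 𝕄 → Fin N × S → ℝ) (b : 𝕄 → ℝ)
    (jstar : Fin N) (x : Fin T → X) (i : Fin (T + 1)) : ℝ :=
  ∑ m, pM m * ∑ g, hatJointAt A μ W b jstar m x i g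

/-- `hatSeqPm … m x = P(X̂ = x̂ | M = m)`. -/
def hatSeqPm {𝕄 S X : Type*} {N T : ℕ} [Fintype S]
    (A : Matrix (Fin N × S) (Fin N × S) ℝ) (μ : Fin N × S → ℝ)
    (W : X → 𝕄 → Fin N × S → ℝ) (b : 𝕄 → ℝ) (jstar : Fin N)
    (m : Fin N → 𝕄) (x : Fin T → X) : ℝ :=
  ∑ h, fwdVec A (A.mulVec μ) (List.ofFn (hatEm W b jstar m x)) h

/-- `hatSeqP … x = P(X̂ = x̂)`. -/
def hatSeqP {𝕄 S X : Type*} {N T : ℕ} [Fintype 𝕄] [Fintype S]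
    (pM : (Fin N → 𝕄) → ℝ) (A : Matrix (Fin N × S) (Fin N × S) ℝ)
    (μ : Fin N × S → ℝ) (W : X → 𝕄 → Fin N × S → ℝ) (b : 𝕄 → ℝ)
    (jstar : Fin N) (x : Fin T → X) : ℝ :=
  ∑ m, pM m * hatSeqPm A μ W b jstar m x

lemma fwdVec_mul_const {H : Type*} [Fintype H] (A : Matrix H H ℝ) (c : ℝ) :
    ∀ (vs : List (H → ℝ)) (μ : H → ℝ) (h : H),
      fwdVec A (fun h' => c * μ h') vs h = c * fwdVec A μ vs h := by
  intro vs
  induction vs with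
  | nil => intro μ h; simp [fwdVec]
  | cons v vs ih =>
    intro μ h
    simp only [fwdVec]
    have : (A.mulVec fun h' => (c * μ h') * v h')
        = fun h' => c * (A.mulVec (fun h'' => μ h'' * v h'') h') := by
      funext h'
      simp only [Matrix.mulVec, dotProduct]
      rw [Finset.mul_sum]
      exact Finset.sum_congr rfl fun _ _ => by ring
    rw [this, ih]

lemma fwdVec_nonneg {H : Type*} [Fintype H] (A : Matrix H H ℝ)
    (hA0 : ∀ g g', 0 ≤ A g' g) :
    ∀ (vs : List (H → ℝ)) (μ : H → ℝ), (∀ h, 0 ≤ μ h) →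
      (∀ v ∈ vs, ∀ h, 0 ≤ v h) → ∀ h, 0 ≤ fwdVec A μ vs h := by
  intro vs
  induction vs with
  | nil => intro μ hμ _ h; simpa [fwdVec] using hμ h
  | cons v vs ih =>
    intro μ hμ hv h
    simp only [fwdVec]
    refine ih _ (fun h' => ?_) (fun v' hv' h' => hv v' (by simp [hv']) h') h
    exact Finset.sum_nonneg fun h'' _ =>
      mul_nonneg (hA0 h'' h') (mul_nonneg (hμ h'') (hv v (by simp) h''))

lemma mJointAt_nonneg {𝕄 S X : Type*} {N T : ℕ} [Fintype S] [DecidableEq S]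
    (A : Matrix (Fin N × S) (Fin N × S) ℝ) (μ : Fin N × S → ℝ)
    (W : X → 𝕄 → Fin N × S → ℝ) (m : Fin N → 𝕄)
    (x : Fin T → X) (i : Fin T) (g : Fin N × S)
    (hA0 : ∀ g g', 0 ≤ A g' g) (hμ0 : ∀ g, 0 ≤ μ g)
    (hW0 : ∀ z m0 g, 0 ≤ W z m0 g) :
    0 ≤ mJointAt A μ W m x i g := by
  refine Finset.sum_nonneg fun h _ => ?_
  refine fwdVec_nonneg A hA0 _ _ (fun h' => ?_) (fun v hv h' => ?_) h
  · exact Finset.sum_nonneg fun h'' _ => mul_nonneg (hA0 h'' h') (hμ0 h'')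
  · simp only [List.mem_ofFn, Set.mem_range] at hv
    obtain ⟨k, rfl⟩ := hv
    by_cases hk : k = i <;> simp [hk]
    · positivity
    · exact hW0 _ _ _

lemma hatJointAt_succ {𝕄 S X : Type*} {N T : ℕ} [Fintype S] [DecidableEq S]
    (A : Matrix (Fin N × S) (Fin N × S) ℝ) (μ : Fin N × S → ℝ)
    (W : X → 𝕄 → Fin N × S → ℝ) (b : 𝕄 → ℝ) (jstar : Fin N)
    (m : Fin N → 𝕄) (x : Fin T → X) (i0 : Fin T) (g : Fin N × S)
    (hstat : A.mulVec μ = μ) :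
    hatJointAt A μ W b jstar m x i0.succ g
      = promptV b jstar m * mJointAt A μ W m x i0 g := by
  unfold hatJointAt mJointAt
  rw [List.ofFn_succ]
  have h0 : (if (0 : Fin (T + 1)) = i0.succ then
        (fun g' => if g' = g then (1:ℝ) else 0)
      else hatEm W b jstar m x 0) = fun _ => promptV b jstar m := by
    rw [if_neg (Fin.succ_ne_zero i0).symm]
    simp [hatEm]
  have htail : (fun k : Fin T =>
      if k.succ = i0.succ then (fun g' => if g' = g then (1:ℝ) else 0)
      else hatEm W b jstar m x k.succ)
      = fun k : Fin T =>
        if k = i0 then (fun g' => if g' = g then (1:ℝ) else 0)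
        else fun g' => W (x k) (m g'.1) g' := by
    funext k
    by_cases hk : k = i0
    · simp [hk]
    · rw [if_neg (fun h => hk (Fin.succ_inj.mp h)), if_neg hk]
      funext g'
      simp [hatEm, Fin.val_succ]
  rw [h0, htail]
  simp only [fwdVec]
  have hstep : (A.mulVec fun h => A.mulVec μ h * promptV b jstar m)
      = fun h => promptV b jstar m * A.mulVec μ h := by
    funext h
    conv_lhs => rw [hstat]
    simp only [Matrix.mulVec, dotProduct]
    rw [Finset.mul_sum]
    exact Finset.sum_congr rfl fun h' _ => by ring
  rw [hstep]
  rw [Finset.mul_sum]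
  exact Finset.sum_congr rfl fun h _ => fwdVec_mul_const A _ _ _ h

/-!
STATEMENT 13 (Claim D.9 of the paper).

Prompt-tuned memory-augmented HMM with the 0/1 prompt
`π_{(m_{1:N},j,s)} = 𝟙(m_{j*} ∈ supp(b))`, assuming the initial hidden-state
distribution is stationary (`P(H_0) = A P(H_0)`).  For every position `i > 1`
of the modified sequence `X̂` (written below as `i₀.succ` for `i₀ ∈ [T]`)
and every `x ∈ X^T` with `P(X̂_{−i} = x̂_{−i}) > 0`:
`supp(P(H_i | X̂_{−i} = x̂_{−i})) ⊆ supp(P(H_{i−1} | X_{−(i−1)} = x_{−(i−1)}))`.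
-/
theorem stmt13 {𝕄 S X : Type*} {N : ℕ}
    [Fintype 𝕄] [Fintype S] [Fintype X] [DecidableEq 𝕄] [DecidableEq S]
    (pM : (Fin N → 𝕄) → ℝ) (μ : Fin N × S → ℝ)
    (A : Matrix (Fin N × S) (Fin N × S) ℝ) (W : X → 𝕄 → Fin N × S → ℝ)
    (hpM0 : ∀ m, 0 ≤ pM m) (hpM1 : ∑ m, pM m = 1)
    (hμ0 : ∀ g, 0 ≤ μ g) (hμ1 : ∑ g, μ g = 1)
    (hA0 : ∀ g g', 0 ≤ A g' g) (hA1 : ∀ g, ∑ g', A g' g = 1)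
    (hW0 : ∀ z m0 g, 0 ≤ W z m0 g) (hW1 : ∀ m0 g, ∑ z, W z m0 g = 1)
    -- stationarity of the initial hidden-state distribution
    (hstat : A.mulVec μ = μ)
    (b : 𝕄 → ℝ) (jstar : Fin N)
    (T : ℕ) (x : Fin T → X) (i0 : Fin T)
    (hpos : 0 < hatZ pM A μ W b jstar x i0.succ) :
    ∀ g : Fin N × S,
      (∑ m, pM m * hatJointAt A μ W b jstar m x i0.succ g)
          / hatZ pM A μ W b jstar x i0.succ ≠ 0 →
      mPostH pM A μ W x i0 g ≠ 0 := by
  intro g hne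
  have hnum : (∑ m, pM m * hatJointAt A μ W b jstar m x i0.succ g) ≠ 0 := by
    intro h
    exact hne (by rw [h]; simp)
  obtain ⟨m0, -, hm0⟩ := Finset.exists_ne_zero_of_sum_ne_zero hnum
  rw [hatJointAt_succ A μ W b jstar m0 x i0 g hstat] at hm0
  have hpm0 : pM m0 ≠ 0 := fun h => hm0 (by simp [h])
  have hmj0 : mJointAt A μ W m0 x i0 g ≠ 0 := fun h => hm0 (by simp [h])
  have hmjnn : ∀ m, 0 ≤ mJointAt A μ W m x i0 g :=
    fun m => mJointAt_nonneg A μ W m x i0 g hA0 hμ0 hW0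
  have hterm : 0 < pM m0 * mJointAt A μ W m0 x i0 g :=
    lt_of_le_of_ne (mul_nonneg (hpM0 m0) (hmjnn m0))
      (Ne.symm (mul_ne_zero hpm0 hmj0))
  have hnumpos : 0 < ∑ m, pM m * mJointAt A μ W m x i0 g :=
    lt_of_lt_of_le hterm (Finset.single_le_sum
      (fun m _ => mul_nonneg (hpM0 m) (hmjnn m)) (Finset.mem_univ m0))
  have hZge : (∑ m, pM m * mJointAt A μ W m x i0 g) ≤ mZ pM A μ W x i0 := by
    refine Finset.sum_le_sum fun m _ => ?_
    refine mul_le_mul_of_nonneg_left ?_ (hpM0 m)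
    exact Finset.single_le_sum
      (fun g' _ => mJointAt_nonneg A μ W m x i0 g' hA0 hμ0 hW0)
      (Finset.mem_univ g)
  exact div_ne_zero (ne_of_gt hnumpos) (ne_of_gt (lt_of_lt_of_le hnumpos hZge))

end
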